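/- arXiv:2505.18902 — 5 statements merged into one kernel-verified Lean document; each statement's English description precedes it below -/
import Mathlib

section
/- Suppose λ_{i,1}·λ_{j,2} + η ≠ 0 for all i, j. Then 1_Nᵀ·R̃⁻¹·1_N = Σ_{j=1}^{n2} Σ_{i=1}^{n1} ũ_{i,1}²·ũ_{j,2}² / (λ_{i,1}·λ_{j,2} + η). -/
open Matrix
open scoped Kronecker

lemma aux_dot {n : Type*} [Fintype n] [DecidableEq n]
    (W : Matrix n n ℝ) (d : n → ℝ)
    (hW : W * Wᵀ = 1) (hW' : Wᵀ * W = 1)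
    (hd : ∀ p, d p ≠ 0) :
    (fun _ : n => (1 : ℝ)) ⬝ᵥ ((W * diagonal d * Wᵀ)⁻¹ *ᵥ fun _ => 1)
      = ∑ p, ((Wᵀ *ᵥ fun _ => 1) p) ^ 2 / d p := by
  have hinv : (W * diagonal d * Wᵀ)⁻¹ = W * diagonal (fun p => (d p)⁻¹) * Wᵀ := by
    apply inv_eq_right_inv
    calc W * diagonal d * Wᵀ * (W * diagonal (fun p => (d p)⁻¹) * Wᵀ)
        = W * diagonal d * (Wᵀ * W) * diagonal (fun p => (d p)⁻¹) * Wᵀ := by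
          simp only [Matrix.mul_assoc]
      _ = W * (diagonal d * diagonal (fun p => (d p)⁻¹)) * Wᵀ := by
          rw [hW']; simp only [Matrix.mul_one, Matrix.mul_assoc]
      _ = 1 := by
          rw [diagonal_mul_diagonal]
          have : (fun p => d p * (d p)⁻¹) = fun _ => (1:ℝ) := by
            funext p; exact mul_inv_cancel₀ (hd p)
          rw [this, diagonal_one, Matrix.mul_one, hW]
  rw [hinv]
  rw [← Matrix.mulVec_mulVec, ← Matrix.mulVec_mulVec, dotProduct_mulVec,
    ← Matrix.mulVec_transpose]
  simp only [mulVec_diagonal, dotProduct]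
  congr 1; funext p
  rw [pow_two, div_eq_mul_inv]; ring

theorem stmt7 (n1 n2 : ℕ) (hn1 : 0 < n1) (hn2 : 0 < n2)
    (R1 U1 : Matrix (Fin n1) (Fin n1) ℝ) (R2 U2 : Matrix (Fin n2) (Fin n2) ℝ)
    (lam1 : Fin n1 → ℝ) (lam2 : Fin n2 → ℝ)
    (hR1sym : R1.IsSymm) (hR2sym : R2.IsSymm)
    (hU1 : U1 * U1ᵀ = 1) (hU1' : U1ᵀ * U1 = 1)
    (hU2 : U2 * U2ᵀ = 1) (hU2' : U2ᵀ * U2 = 1)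
    (hR1 : R1 = U1 * Matrix.diagonal lam1 * U1ᵀ)
    (hR2 : R2 = U2 * Matrix.diagonal lam2 * U2ᵀ)
    (η : ℝ)
    (hnz : ∀ (i : Fin n1) (j : Fin n2), lam1 i * lam2 j + η ≠ 0) :
    (fun _ : Fin n2 × Fin n1 => (1 : ℝ)) ⬝ᵥ
        ((R2 ⊗ₖ R1 + η • (1 : Matrix (Fin n2 × Fin n1) (Fin n2 × Fin n1) ℝ))⁻¹ *ᵥ
          fun _ => 1)
      = ∑ j : Fin n2, ∑ i : Fin n1,
          ((U1ᵀ *ᵥ fun _ => 1) i) ^ 2 * ((U2ᵀ *ᵥ fun _ => 1) j) ^ 2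
            / (lam1 i * lam2 j + η) := by
  set W : Matrix (Fin n2 × Fin n1) (Fin n2 × Fin n1) ℝ := U2 ⊗ₖ U1 with hWdef
  set d : Fin n2 × Fin n1 → ℝ := fun p => lam2 p.1 * lam1 p.2 + η with hddef
  have hWT : Wᵀ = U2ᵀ ⊗ₖ U1ᵀ := (kroneckerMap_transpose _ _ _).symm
  have hWW : W * Wᵀ = 1 := by
    rw [hWT, hWdef, ← mul_kronecker_mul, hU1, hU2, one_kronecker_one]
  have hWW' : Wᵀ * W = 1 := by
    rw [hWT, hWdef, ← mul_kronecker_mul, hU1', hU2', one_kronecker_one]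
  have hM : R2 ⊗ₖ R1 + η • (1 : Matrix (Fin n2 × Fin n1) (Fin n2 × Fin n1) ℝ)
      = W * diagonal d * Wᵀ := by
    rw [hR1, hR2, mul_kronecker_mul, mul_kronecker_mul, ← hWdef, ← hWT,
      diagonal_kronecker_diagonal]
    have h1 : η • (1 : Matrix (Fin n2 × Fin n1) (Fin n2 × Fin n1) ℝ)
        = W * (η • (1 : Matrix (Fin n2 × Fin n1) (Fin n2 × Fin n1) ℝ)) * Wᵀ := by
      rw [Matrix.mul_smul, Matrix.mul_one, Matrix.smul_mul, hWW]
    rw [h1, ← Matrix.add_mul, ← Matrix.mul_add]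
    congr 1
    congr 1
    rw [← diagonal_one, ← diagonal_smul, diagonal_add]
    congr 1
    funext p
    simp [hddef]
  have hd : ∀ p, d p ≠ 0 := fun p => by
    simpa [hddef, mul_comm] using hnz p.2 p.1
  rw [hM, aux_dot W d hWW hWW' hd]
  rw [Fintype.sum_prod_type]
  congr 1; funext j; congr 1; funext i
  have hWv : (Wᵀ *ᵥ fun _ => 1) (j, i)
      = ((U2ᵀ *ᵥ fun _ => 1) j) * ((U1ᵀ *ᵥ fun _ => 1) i) := by
    rw [hWT]
    simp only [mulVec, dotProduct, Fintype.sum_prod_type, kroneckerMap_apply, mul_one]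
    rw [← Finset.sum_mul_sum]
  rw [hWv, mul_pow, hddef]
  ring_nf
end

section
/- Suppose λ_{i,1}·λ_{j,2} + η ≠ 0 for all i, j. Then for any n1×n2 real matrix Y and any real number μ, the quadratic form S² = (vec(Y) − μ·1_N)ᵀ·R̃⁻¹·(vec(Y) − μ·1_N) satisfies S² = Σ_{i=1}^{n1} Σ_{j=1}^{n2} Ỹ_{i,j}² / (λ_{i,1}·λ_{j,2} + η), where Ỹ_{i,j} is the (i,j) entry of U1ᵀ·(Y − μ·J)·U2 and J is the n1×n2 all-ones matrix. -/
open Matrix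
open scoped Kronecker

/-- Column-stacking vectorization: the entry of `vec Y` at index `(j, i)` is `Y i j`. -/
def vec {n1 n2 : ℕ} (Y : Matrix (Fin n1) (Fin n2) ℝ) : Fin n2 × Fin n1 → ℝ :=
  fun p => Y p.2 p.1

/-!
Put `U = U2 ⊗ U1`, which is orthogonal. By the mixed-product rule,
`R2 ⊗ R1 + η I = U (Λ2 ⊗ Λ1 + η I) Uᵀ`, so `R̃⁻¹ = U D⁻¹ Uᵀ` with `D` the diagonal matrix of the
`λ_{i,1} λ_{j,2} + η`. The quadratic form becomes `wᵀ D⁻¹ w` with `w = Uᵀ vec(Y - μJ)`, and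
`(A ⊗ B) vec X = vec (B X Aᵀ)` identifies `w` with `vec (U1ᵀ (Y - μJ) U2)`.
-/

section OrthogonalConjugation

variable {n K : Type*} [Fintype n]

theorem Matrix.inv_conj_diagonal [DecidableEq n] [Field K] {U : Matrix n n K}
    (hU : Uᵀ * U = 1) {d : n → K} (hd : ∀ i, d i ≠ 0) :
    (U * diagonal d * Uᵀ)⁻¹ = U * diagonal d⁻¹ * Uᵀ := by
  have hinv : diagonal d⁻¹ * diagonal d = 1 := by
    rw [diagonal_mul_diagonal, ← diagonal_one]
    exact congrArg diagonal (funext fun i => inv_mul_cancel₀ (hd i))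
  rw [mul_inv_rev, mul_inv_rev, inv_eq_left_inv hU, inv_eq_right_inv hU, inv_eq_left_inv hinv,
    Matrix.mul_assoc]

theorem Matrix.dotProduct_conj_mulVec [CommSemiring K] (U A : Matrix n n K) (v : n → K) :
    v ⬝ᵥ (U * A * Uᵀ) *ᵥ v = (Uᵀ *ᵥ v) ⬝ᵥ A *ᵥ (Uᵀ *ᵥ v) := by
  rw [← mulVec_mulVec, ← mulVec_mulVec, dotProduct_mulVec, mulVec_transpose]

end OrthogonalConjugation

section Kronecker

variable {m n K : Type*} [Fintype m] [Fintype n] [DecidableEq m] [DecidableEq n] [CommRing K]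

theorem Matrix.kronecker_add_smul_one_eq_conj_diagonal {A U : Matrix m m K}
    {B V : Matrix n n K} {a : m → K} {b : n → K} (hU : U * Uᵀ = 1) (hV : V * Vᵀ = 1)
    (hA : A = U * diagonal a * Uᵀ) (hB : B = V * diagonal b * Vᵀ) (η : K) :
    A ⊗ₖ B + η • 1 = (U ⊗ₖ V) * diagonal (fun p => b p.2 * a p.1 + η) * (U ⊗ₖ V)ᵀ := by
  have hUV : (U ⊗ₖ V) * (U ⊗ₖ V)ᵀ = 1 := by
    rw [← kroneckerMap_transpose, ← mul_kronecker_mul, hU, hV, one_kronecker_one]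
  have hη : (η • 1 : Matrix (m × n) (m × n) K) =
      (U ⊗ₖ V) * diagonal (fun _ => η) * (U ⊗ₖ V)ᵀ := by
    rw [← smul_one_eq_diagonal, Matrix.mul_smul, Matrix.smul_mul, Matrix.mul_one, hUV]
  rw [hη, hA, hB, mul_kronecker_mul, mul_kronecker_mul, diagonal_kronecker_diagonal,
    ← kroneckerMap_transpose, ← Matrix.add_mul, ← Matrix.mul_add, diagonal_add]
  simp_rw [mul_comm (a _)]

end Kronecker

theorem Matrix.vec_dotProduct_diagonal_mulVec_vec {m n R : Type*} [Fintype m] [Fintype n]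
    [DecidableEq m] [DecidableEq n] [CommSemiring R] (X : Matrix m n R) (d : n × m → R) :
    vec X ⬝ᵥ diagonal d *ᵥ vec X = ∑ i, ∑ j, X i j ^ 2 * d (j, i) := by
  rw [dotProduct, Fintype.sum_prod_type, Finset.sum_comm]
  simp only [mulVec_diagonal, vec, sq, mul_assoc, mul_comm (d _)]

theorem stmt8_general (n1 n2 : ℕ)
    (R1 U1 : Matrix (Fin n1) (Fin n1) ℝ) (R2 U2 : Matrix (Fin n2) (Fin n2) ℝ)
    (lam1 : Fin n1 → ℝ) (lam2 : Fin n2 → ℝ)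
    (hU1' : U1ᵀ * U1 = 1)
    (hU2' : U2ᵀ * U2 = 1)
    (hR1 : R1 = U1 * Matrix.diagonal lam1 * U1ᵀ)
    (hR2 : R2 = U2 * Matrix.diagonal lam2 * U2ᵀ)
    (η : ℝ)
    (hnz : ∀ (i : Fin n1) (j : Fin n2), lam1 i * lam2 j + η ≠ 0)
    (Y : Matrix (Fin n1) (Fin n2) ℝ) (μ : ℝ) :
    (_root_.vec Y - μ • (fun _ : Fin n2 × Fin n1 => (1 : ℝ))) ⬝ᵥ
        ((R2 ⊗ₖ R1 + η • (1 : Matrix (Fin n2 × Fin n1) (Fin n2 × Fin n1) ℝ))⁻¹ *ᵥ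
          (_root_.vec Y - μ • (fun _ : Fin n2 × Fin n1 => (1 : ℝ))))
      = ∑ i : Fin n1, ∑ j : Fin n2,
          ((U1ᵀ * (Y - μ • (Matrix.of fun _ _ => (1 : ℝ) : Matrix (Fin n1) (Fin n2) ℝ)) * U2) i j) ^ 2
            / (lam1 i * lam2 j + η) := by
  have hU : (U2 ⊗ₖ U1)ᵀ * (U2 ⊗ₖ U1) = 1 := by
    rw [← kroneckerMap_transpose, ← mul_kronecker_mul, hU1', hU2', one_kronecker_one]
  have hcentered :
      _root_.vec Y - μ • (fun _ => 1) = Matrix.vec (Y - μ • of fun _ _ => 1) := rfl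
  rw [hcentered, kronecker_add_smul_one_eq_conj_diagonal (mul_eq_one_comm.mp hU2')
      (mul_eq_one_comm.mp hU1') hR2 hR1, inv_conj_diagonal hU fun p => hnz p.2 p.1,
    dotProduct_conj_mulVec, ← kroneckerMap_transpose, kronecker_mulVec_vec, transpose_transpose,
    vec_dotProduct_diagonal_mulVec_vec]
  simp only [Pi.inv_apply, div_eq_mul_inv]

theorem stmt8 (n1 n2 : ℕ) (hn1 : 0 < n1) (hn2 : 0 < n2)
    (R1 U1 : Matrix (Fin n1) (Fin n1) ℝ) (R2 U2 : Matrix (Fin n2) (Fin n2) ℝ)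
    (lam1 : Fin n1 → ℝ) (lam2 : Fin n2 → ℝ)
    (hR1sym : R1.IsSymm) (hR2sym : R2.IsSymm)
    (hU1 : U1 * U1ᵀ = 1) (hU1' : U1ᵀ * U1 = 1)
    (hU2 : U2 * U2ᵀ = 1) (hU2' : U2ᵀ * U2 = 1)
    (hR1 : R1 = U1 * Matrix.diagonal lam1 * U1ᵀ)
    (hR2 : R2 = U2 * Matrix.diagonal lam2 * U2ᵀ)
    (η : ℝ)
    (hnz : ∀ (i : Fin n1) (j : Fin n2), lam1 i * lam2 j + η ≠ 0)
    (Y : Matrix (Fin n1) (Fin n2) ℝ) (μ : ℝ) :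
    (_root_.vec Y - μ • (fun _ : Fin n2 × Fin n1 => (1 : ℝ))) ⬝ᵥ
        ((R2 ⊗ₖ R1 + η • (1 : Matrix (Fin n2 × Fin n1) (Fin n2 × Fin n1) ℝ))⁻¹ *ᵥ
          (_root_.vec Y - μ • (fun _ : Fin n2 × Fin n1 => (1 : ℝ))))
      = ∑ i : Fin n1, ∑ j : Fin n2,
          ((U1ᵀ * (Y - μ • (Matrix.of fun _ _ => (1 : ℝ) : Matrix (Fin n1) (Fin n2) ℝ)) * U2) i j) ^ 2
            / (lam1 i * lam2 j + η) :=
  stmt8_general n1 n2 R1 U1 R2 U2 lam1 lam2 hU1' hU2' hR1 hR2 η hnz Y μ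
end

section
/- Suppose λ_{i,1}·λ_{j,2} + η > 0 for all i, j. Then for any n1×n2 real matrix Y, any real number μ, and any real constant C, the log profile likelihood satisfies C − (1/2)·log det(R̃) − (N/2)·log((vec(Y) − μ·1_N)ᵀ·R̃⁻¹·(vec(Y) − μ·1_N)) = C − (1/2)·Σ_{i=1}^{n1} Σ_{j=1}^{n2} log(λ_{i,1}·λ_{j,2} + η) − (N/2)·log(Σ_{i=1}^{n1} Σ_{j=1}^{n2} Ỹ_{i,j}² / (λ_{i,1}·λ_{j,2} + η)), where Ỹ_{i,j} is the (i,j) entry of U1ᵀ·(Y − μ·J)·U2 and J is the n1×n2 all-ones matrix. -/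
open Matrix
open scoped Kronecker

/-!
With `U = U₂ ⊗ U₁`, which is orthogonal, the mixed-product rule gives
`R̃ = U · diag(λ_{j,2} λ_{i,1} + η) · Uᵀ`. Hence `det R̃` is the product of these eigenvalues,
`R̃⁻¹ = U · diag(λ_{j,2} λ_{i,1} + η)⁻¹ · Uᵀ`, and the quadratic form only sees
`Uᵀ vec(Y - μJ) = vec(U₁ᵀ (Y - μJ) U₂)`.
-/

namespace Matrix

variable {n R : Type*} [Fintype n] [DecidableEq n]

section CommRing

variable [CommRing R] {U : Matrix n n R}

theorem det_mul_mul_transpose (hU : U * Uᵀ = 1) (A : Matrix n n R) :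
    det (U * A * Uᵀ) = det A := by
  have hdet : det U * det Uᵀ = 1 := by rw [← det_mul, hU, det_one]
  rw [det_mul, det_mul, mul_right_comm, hdet, one_mul]

theorem inv_mul_mul_transpose (hU : U * Uᵀ = 1) (A : Matrix n n R) :
    (U * A * Uᵀ)⁻¹ = U * A⁻¹ * Uᵀ := by
  rw [mul_inv_rev, mul_inv_rev, inv_eq_left_inv hU, inv_eq_right_inv hU, Matrix.mul_assoc]

theorem mul_diagonal_mul_transpose_add_smul_one (hU : U * Uᵀ = 1) (d : n → R) (c : R) :
    U * diagonal d * Uᵀ + c • (1 : Matrix n n R) = U * diagonal (fun p => d p + c) * Uᵀ := by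
  have hc : c • (1 : Matrix n n R) = U * diagonal (fun _ => c) * Uᵀ := by
    rw [← smul_one_eq_diagonal, Matrix.mul_smul, Matrix.mul_one, Matrix.smul_mul, hU]
  rw [hc, ← Matrix.add_mul, ← Matrix.mul_add, diagonal_add]

theorem dotProduct_mul_diagonal_mul_transpose_mulVec (U : Matrix n n R) (d v : n → R) :
    v ⬝ᵥ (U * diagonal d * Uᵀ) *ᵥ v = ∑ p, d p * (Uᵀ *ᵥ v) p ^ 2 := by
  rw [← mulVec_mulVec, ← mulVec_mulVec, dotProduct_mulVec, ← mulVec_transpose]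
  simp only [dotProduct, mulVec_diagonal]
  exact Finset.sum_congr rfl fun p _ => by ring

end CommRing

theorem dotProduct_inv_mul_diagonal_mul_transpose_mulVec {K : Type*} [Field K]
    {U : Matrix n n K} (hU : U * Uᵀ = 1) {d : n → K} (hd : ∀ p, d p ≠ 0) (v : n → K) :
    v ⬝ᵥ (U * diagonal d * Uᵀ)⁻¹ *ᵥ v = ∑ p, (Uᵀ *ᵥ v) p ^ 2 / d p := by
  have hinv : (diagonal d)⁻¹ = diagonal fun p => (d p)⁻¹ :=
    inv_eq_right_inv (by simp [diagonal_mul_diagonal, hd])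
  rw [inv_mul_mul_transpose hU, hinv, dotProduct_mul_diagonal_mul_transpose_mulVec]
  exact Finset.sum_congr rfl fun p _ => inv_mul_eq_div _ _

end Matrix

theorem stmt9_general (n1 n2 : ℕ)
    (R1 U1 : Matrix (Fin n1) (Fin n1) ℝ) (R2 U2 : Matrix (Fin n2) (Fin n2) ℝ)
    (lam1 : Fin n1 → ℝ) (lam2 : Fin n2 → ℝ)
    (hU1 : U1 * U1ᵀ = 1)
    (hU2 : U2 * U2ᵀ = 1)
    (hR1 : R1 = U1 * Matrix.diagonal lam1 * U1ᵀ)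
    (hR2 : R2 = U2 * Matrix.diagonal lam2 * U2ᵀ)
    (η : ℝ)
    (hpos : ∀ (i : Fin n1) (j : Fin n2), 0 < lam1 i * lam2 j + η)
    (Y : Matrix (Fin n1) (Fin n2) ℝ) (μ : ℝ) (C : ℝ) :
    C - (1 / 2) * Real.log
          (R2 ⊗ₖ R1 + η • (1 : Matrix (Fin n2 × Fin n1) (Fin n2 × Fin n1) ℝ)).det
      - (((n1 * n2 : ℕ) : ℝ) / 2) * Real.log
          ((_root_.vec Y - μ • (fun _ : Fin n2 × Fin n1 => (1 : ℝ))) ⬝ᵥ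
            ((R2 ⊗ₖ R1 + η • (1 : Matrix (Fin n2 × Fin n1) (Fin n2 × Fin n1) ℝ))⁻¹ *ᵥ
              (_root_.vec Y - μ • (fun _ : Fin n2 × Fin n1 => (1 : ℝ)))))
    = C - (1 / 2) * (∑ i : Fin n1, ∑ j : Fin n2, Real.log (lam1 i * lam2 j + η))
      - (((n1 * n2 : ℕ) : ℝ) / 2) * Real.log
          (∑ i : Fin n1, ∑ j : Fin n2,
            ((U1ᵀ * (Y - μ • (Matrix.of fun _ _ => (1 : ℝ) : Matrix (Fin n1) (Fin n2) ℝ)) * U2) i j) ^ 2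
              / (lam1 i * lam2 j + η)) := by
  set J : Matrix (Fin n1) (Fin n2) ℝ := Matrix.of fun _ _ => 1
  have hU : (U2 ⊗ₖ U1) * (U2 ⊗ₖ U1)ᵀ = 1 := by
    rw [← kroneckerMap_transpose, ← mul_kronecker_mul, hU1, hU2, one_kronecker_one]
  have hR : R2 ⊗ₖ R1 + η • (1 : Matrix (Fin n2 × Fin n1) (Fin n2 × Fin n1) ℝ)
      = (U2 ⊗ₖ U1) * diagonal (fun p => lam1 p.2 * lam2 p.1 + η) * (U2 ⊗ₖ U1)ᵀ := by
    rw [hR1, hR2, mul_kronecker_mul, mul_kronecker_mul, diagonal_kronecker_diagonal,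
      kroneckerMap_transpose, mul_diagonal_mul_transpose_add_smul_one hU]
    simp only [mul_comm]
  have hv : _root_.vec Y - μ • (fun _ => 1) = Matrix.vec (Y - μ • J) := rfl
  have hw : (U2 ⊗ₖ U1)ᵀ *ᵥ Matrix.vec (Y - μ • J) = Matrix.vec (U1ᵀ * (Y - μ • J) * U2) := by
    rw [← kroneckerMap_transpose, kronecker_mulVec_vec, transpose_transpose]
  rw [hR, det_mul_mul_transpose hU, det_diagonal,
    Real.log_prod fun p _ => (hpos p.2 p.1).ne', hv,
    dotProduct_inv_mul_diagonal_mul_transpose_mulVec hU fun p => (hpos p.2 p.1).ne', hw,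
    Fintype.sum_prod_type_right, Fintype.sum_prod_type_right]
  rfl

theorem stmt9 (n1 n2 : ℕ) (hn1 : 0 < n1) (hn2 : 0 < n2)
    (R1 U1 : Matrix (Fin n1) (Fin n1) ℝ) (R2 U2 : Matrix (Fin n2) (Fin n2) ℝ)
    (lam1 : Fin n1 → ℝ) (lam2 : Fin n2 → ℝ)
    (hR1sym : R1.IsSymm) (hR2sym : R2.IsSymm)
    (hU1 : U1 * U1ᵀ = 1) (hU1' : U1ᵀ * U1 = 1)
    (hU2 : U2 * U2ᵀ = 1) (hU2' : U2ᵀ * U2 = 1)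
    (hR1 : R1 = U1 * Matrix.diagonal lam1 * U1ᵀ)
    (hR2 : R2 = U2 * Matrix.diagonal lam2 * U2ᵀ)
    (η : ℝ)
    (hpos : ∀ (i : Fin n1) (j : Fin n2), 0 < lam1 i * lam2 j + η)
    (Y : Matrix (Fin n1) (Fin n2) ℝ) (μ : ℝ) (C : ℝ) :
    C - (1 / 2) * Real.log
          (R2 ⊗ₖ R1 + η • (1 : Matrix (Fin n2 × Fin n1) (Fin n2 × Fin n1) ℝ)).det
      - (((n1 * n2 : ℕ) : ℝ) / 2) * Real.log
          ((_root_.vec Y - μ • (fun _ : Fin n2 × Fin n1 => (1 : ℝ))) ⬝ᵥ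
            ((R2 ⊗ₖ R1 + η • (1 : Matrix (Fin n2 × Fin n1) (Fin n2 × Fin n1) ℝ))⁻¹ *ᵥ
              (_root_.vec Y - μ • (fun _ : Fin n2 × Fin n1 => (1 : ℝ)))))
    = C - (1 / 2) * (∑ i : Fin n1, ∑ j : Fin n2, Real.log (lam1 i * lam2 j + η))
      - (((n1 * n2 : ℕ) : ℝ) / 2) * Real.log
          (∑ i : Fin n1, ∑ j : Fin n2,
            ((U1ᵀ * (Y - μ • (Matrix.of fun _ _ => (1 : ℝ) : Matrix (Fin n1) (Fin n2) ℝ)) * U2) i j) ^ 2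
              / (lam1 i * lam2 j + η)) :=
  stmt9_general n1 n2 R1 U1 R2 U2 lam1 lam2 hU1 hU2 hR1 hR2 η hpos Y μ C
end

section
/- Suppose λ_{i,1}·λ_{j,2} + η ≠ 0 for all i, j, and suppose 1_Nᵀ·R̃⁻¹·1_N ≠ 0. Then the generalized least squares estimator μ̂ = (1_Nᵀ·R̃⁻¹·1_N)⁻¹·(1_Nᵀ·R̃⁻¹·vec(Y)) satisfies μ̂ = (Σ_{j=1}^{n2} Σ_{i=1}^{n1} ũ_{i,1}²·ũ_{j,2}² / (λ_{i,1}·λ_{j,2} + η))⁻¹ · (Σ_{j=1}^{n2} Σ_{i=1}^{n1} ũ_{i,1}·Ỹ_{i,j,0}·ũ_{j,2} / (λ_{i,1}·λ_{j,2} + η)), where Ỹ_{i,j,0} is the (i,j) entry of U1ᵀ·Y·U2. -/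
/-! In the orthonormal eigenbasis `U2 ⊗ U1` of `R2 ⊗ R1` the matrix `R̃` is diagonal with
entries `λ_{j,2} λ_{i,1} + η`, so `1ᵀ R̃⁻¹ x` is a weighted sum of products of coordinates of
`1_N` and `x` in that basis. The coordinates of `1_N` are `ũ_{j,2} ũ_{i,1}`, and those of
`vec Y` are `vec (U1ᵀ Y U2)`. -/

open Matrix
open scoped Kronecker

namespace Matrix

section Kronecker

variable {l m n p R : Type*} [Fintype m] [Fintype p] [CommSemiring R]

theorem kronecker_mulVec_mul (A : Matrix l m R) (B : Matrix n p R) (a : m → R) (b : p → R) :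
    (A ⊗ₖ B) *ᵥ (fun q => a q.1 * b q.2) = fun q => (A *ᵥ a) q.1 * (B *ᵥ b) q.2 := by
  funext q
  simp only [mulVec, dotProduct, Fintype.sum_prod_type, kroneckerMap_apply, Finset.sum_mul_sum]
  exact Finset.sum_congr rfl fun j _ => Finset.sum_congr rfl fun i _ => by ring

variable [DecidableEq m] [DecidableEq p]

theorem transpose_kronecker_mul_self {U : Matrix m m R} {V : Matrix p p R}
    (hU : U * Uᵀ = 1) (hV : V * Vᵀ = 1) : (U ⊗ₖ V) * (U ⊗ₖ V)ᵀ = 1 := by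
  rw [← kroneckerMap_transpose, ← mul_kronecker_mul, hU, hV, one_kronecker_one]

theorem conj_diagonal_kronecker_conj_diagonal (U : Matrix m m R) (V : Matrix p p R)
    (a : m → R) (b : p → R) :
    (U * diagonal a * Uᵀ) ⊗ₖ (V * diagonal b * Vᵀ)
      = (U ⊗ₖ V) * diagonal (fun q => a q.1 * b q.2) * (U ⊗ₖ V)ᵀ := by
  rw [mul_kronecker_mul, mul_kronecker_mul, diagonal_kronecker_diagonal, kroneckerMap_transpose]

end Kronecker

variable {ι : Type*} [Fintype ι] [DecidableEq ι]

theorem conj_diagonal_add_smul_one {R : Type*} [CommSemiring R] {U : Matrix ι ι R}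
    (hU : U * Uᵀ = 1) (d : ι → R) (c : R) :
    U * diagonal d * Uᵀ + c • 1 = U * diagonal (fun i => d i + c) * Uᵀ := by
  have hdiag : diagonal (fun i => d i + c) = diagonal d + c • 1 := by
    rw [smul_one_eq_diagonal, diagonal_add]
  rw [hdiag, Matrix.mul_add, Matrix.add_mul, Matrix.mul_smul, Matrix.smul_mul, Matrix.mul_one, hU]

theorem dotProduct_conj_diagonal_mulVec {R : Type*} [CommSemiring R] (U : Matrix ι ι R)
    (e v x : ι → R) :
    v ⬝ᵥ (U * diagonal e * Uᵀ) *ᵥ x = ∑ i, (Uᵀ *ᵥ v) i * e i * (Uᵀ *ᵥ x) i := by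
  rw [← mulVec_mulVec, ← mulVec_mulVec, dotProduct_mulVec, ← mulVec_transpose]
  simp only [dotProduct, mulVec_diagonal]
  exact Finset.sum_congr rfl fun i _ => by ring

variable {K : Type*} [Field K]

theorem inv_conj_diagonal_s10 {U : Matrix ι ι K} (hU : U * Uᵀ = 1) {d : ι → K} (hd : ∀ i, d i ≠ 0) :
    (U * diagonal d * Uᵀ)⁻¹ = U * diagonal (fun i => (d i)⁻¹) * Uᵀ := by
  have hU' : Uᵀ * U = 1 := mul_eq_one_comm.mp hU
  apply inv_eq_right_inv
  calc U * diagonal d * Uᵀ * (U * diagonal (fun i => (d i)⁻¹) * Uᵀ)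
      = U * (diagonal d * (Uᵀ * U) * diagonal (fun i => (d i)⁻¹)) * Uᵀ := by
        simp only [Matrix.mul_assoc]
    _ = 1 := by
        rw [hU', Matrix.mul_one, diagonal_mul_diagonal]
        simp only [mul_inv_cancel₀ (hd _), diagonal_one, Matrix.mul_one, hU]

theorem dotProduct_inv_conj_diagonal_mulVec {U : Matrix ι ι K} (hU : U * Uᵀ = 1) {d : ι → K}
    (hd : ∀ i, d i ≠ 0) (v x : ι → K) :
    v ⬝ᵥ (U * diagonal d * Uᵀ)⁻¹ *ᵥ x = ∑ i, (Uᵀ *ᵥ v) i * (Uᵀ *ᵥ x) i / d i := by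
  rw [inv_conj_diagonal_s10 hU hd, dotProduct_conj_diagonal_mulVec]
  exact Finset.sum_congr rfl fun i _ => by ring

end Matrix

theorem stmt10_general (n1 n2 : ℕ)
    (R1 U1 : Matrix (Fin n1) (Fin n1) ℝ) (R2 U2 : Matrix (Fin n2) (Fin n2) ℝ)
    (lam1 : Fin n1 → ℝ) (lam2 : Fin n2 → ℝ)
    (hU1 : U1 * U1ᵀ = 1)
    (hU2 : U2 * U2ᵀ = 1)
    (hR1 : R1 = U1 * Matrix.diagonal lam1 * U1ᵀ)
    (hR2 : R2 = U2 * Matrix.diagonal lam2 * U2ᵀ)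
    (η : ℝ)
    (hnz : ∀ (i : Fin n1) (j : Fin n2), lam1 i * lam2 j + η ≠ 0)
    (Y : Matrix (Fin n1) (Fin n2) ℝ) :
    ((fun _ : Fin n2 × Fin n1 => (1 : ℝ)) ⬝ᵥ
        ((R2 ⊗ₖ R1 + η • (1 : Matrix (Fin n2 × Fin n1) (Fin n2 × Fin n1) ℝ))⁻¹ *ᵥ
          fun _ => 1))⁻¹ *
      ((fun _ : Fin n2 × Fin n1 => (1 : ℝ)) ⬝ᵥ
        ((R2 ⊗ₖ R1 + η • (1 : Matrix (Fin n2 × Fin n1) (Fin n2 × Fin n1) ℝ))⁻¹ *ᵥ _root_.vec Y))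
    = (∑ j : Fin n2, ∑ i : Fin n1,
          ((U1ᵀ *ᵥ fun _ => 1) i) ^ 2 * ((U2ᵀ *ᵥ fun _ => 1) j) ^ 2
            / (lam1 i * lam2 j + η))⁻¹ *
      (∑ j : Fin n2, ∑ i : Fin n1,
          (U1ᵀ *ᵥ fun _ => 1) i * (U1ᵀ * Y * U2) i j * (U2ᵀ *ᵥ fun _ => 1) j
            / (lam1 i * lam2 j + η)) := by
  have hU := transpose_kronecker_mul_self hU2 hU1
  have hR : R2 ⊗ₖ R1 + η • (1 : Matrix (Fin n2 × Fin n1) (Fin n2 × Fin n1) ℝ)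
      = (U2 ⊗ₖ U1) * diagonal (fun p => lam2 p.1 * lam1 p.2 + η) * (U2 ⊗ₖ U1)ᵀ := by
    rw [hR1, hR2, conj_diagonal_kronecker_conj_diagonal, conj_diagonal_add_smul_one hU]
  have hd : ∀ p : Fin n2 × Fin n1, lam2 p.1 * lam1 p.2 + η ≠ 0 := fun p => by
    simpa only [mul_comm] using hnz p.2 p.1
  have hones : (U2 ⊗ₖ U1)ᵀ *ᵥ (fun _ => (1 : ℝ))
      = fun p => (U2ᵀ *ᵥ fun _ => 1) p.1 * (U1ᵀ *ᵥ fun _ => 1) p.2 := by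
    rw [← kroneckerMap_transpose]
    simpa only [mul_one] using kronecker_mulVec_mul U2ᵀ U1ᵀ (fun _ => (1 : ℝ)) (fun _ => 1)
  have hvec : (U2 ⊗ₖ U1)ᵀ *ᵥ _root_.vec Y = Matrix.vec (U1ᵀ * Y * U2) := by
    rw [← kroneckerMap_transpose, ← transpose_transpose U2]
    exact kronecker_mulVec_vec U1ᵀ Y U2ᵀ
  rw [hR, dotProduct_inv_conj_diagonal_mulVec hU hd, dotProduct_inv_conj_diagonal_mulVec hU hd,
    hones, hvec, Fintype.sum_prod_type, Fintype.sum_prod_type]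
  congr 1
  · congr 1
    exact Finset.sum_congr rfl fun j _ => Finset.sum_congr rfl fun i _ => by ring
  · exact Finset.sum_congr rfl fun j _ => Finset.sum_congr rfl fun i _ => by
      rw [Matrix.vec]; ring

theorem stmt10 (n1 n2 : ℕ) (hn1 : 0 < n1) (hn2 : 0 < n2)
    (R1 U1 : Matrix (Fin n1) (Fin n1) ℝ) (R2 U2 : Matrix (Fin n2) (Fin n2) ℝ)
    (lam1 : Fin n1 → ℝ) (lam2 : Fin n2 → ℝ)
    (hR1sym : R1.IsSymm) (hR2sym : R2.IsSymm)
    (hU1 : U1 * U1ᵀ = 1) (hU1' : U1ᵀ * U1 = 1)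
    (hU2 : U2 * U2ᵀ = 1) (hU2' : U2ᵀ * U2 = 1)
    (hR1 : R1 = U1 * Matrix.diagonal lam1 * U1ᵀ)
    (hR2 : R2 = U2 * Matrix.diagonal lam2 * U2ᵀ)
    (η : ℝ)
    (hnz : ∀ (i : Fin n1) (j : Fin n2), lam1 i * lam2 j + η ≠ 0)
    (Y : Matrix (Fin n1) (Fin n2) ℝ)
    (hden : (fun _ : Fin n2 × Fin n1 => (1 : ℝ)) ⬝ᵥ
        ((R2 ⊗ₖ R1 + η • (1 : Matrix (Fin n2 × Fin n1) (Fin n2 × Fin n1) ℝ))⁻¹ *ᵥ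
          fun _ => 1) ≠ 0) :
    ((fun _ : Fin n2 × Fin n1 => (1 : ℝ)) ⬝ᵥ
        ((R2 ⊗ₖ R1 + η • (1 : Matrix (Fin n2 × Fin n1) (Fin n2 × Fin n1) ℝ))⁻¹ *ᵥ
          fun _ => 1))⁻¹ *
      ((fun _ : Fin n2 × Fin n1 => (1 : ℝ)) ⬝ᵥ
        ((R2 ⊗ₖ R1 + η • (1 : Matrix (Fin n2 × Fin n1) (Fin n2 × Fin n1) ℝ))⁻¹ *ᵥ _root_.vec Y))
    = (∑ j : Fin n2, ∑ i : Fin n1,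
          ((U1ᵀ *ᵥ fun _ => 1) i) ^ 2 * ((U2ᵀ *ᵥ fun _ => 1) j) ^ 2
            / (lam1 i * lam2 j + η))⁻¹ *
      (∑ j : Fin n2, ∑ i : Fin n1,
          (U1ᵀ *ᵥ fun _ => 1) i * (U1ᵀ * Y * U2) i j * (U2ᵀ *ᵥ fun _ => 1) j
            / (lam1 i * lam2 j + η)) :=
  stmt10_general n1 n2 R1 U1 R2 U2 lam1 lam2 hU1 hU2 hR1 hR2 η hnz Y
end

section
/- Suppose λ_{i,1}·λ_{j,2} + η ≠ 0 for all i, j. Then for any n1×n2 real matrix Y and any real number μ, the predictive-mean correction satisfies (R2 ⊗ R1)·R̃⁻¹·(vec(Y) − μ·1_N) = vec(U1·Λ1·Ỹ0·Λ2·U2ᵀ), where Ỹ0 is the n1×n2 matrix whose (i,j) entry is Ỹ_{i,j} / (λ_{i,1}·λ_{j,2} + η) and Ỹ_{i,j} is the (i,j) entry of U1ᵀ·(Y − μ·J)·U2, with J the n1×n2 all-ones matrix. -/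
open Matrix
open scoped Kronecker

/-! With `U = U2 ⊗ U1`, which is orthogonal, both `R2 ⊗ R1` and `R̃` are diagonalised by `U`, with
eigenvalues `λ_{j,2} λ_{i,1}` and `λ_{j,2} λ_{i,1} + η`; hence `(R2 ⊗ R1) R̃⁻¹` is
`U · diag(λλ / (λλ + η)) · Uᵀ`. Since `vec (A X Bᵀ) = (B ⊗ A) vec X`, applying `Uᵀ`, the diagonal
and `U` to `vec (Y - μ J)` is `vec` of the same three steps performed on matrices:
`X ↦ U1ᵀ X U2`, entrywise scaling, and `X ↦ U1 X U2ᵀ`. -/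

section Spectral

variable {ι 𝕜 : Type*} [Fintype ι] [DecidableEq ι] [Field 𝕜]

theorem Matrix.inv_mul_diagonal_mul {U V : Matrix ι ι 𝕜} (hUV : U * V = 1) {d : ι → 𝕜}
    (hd : ∀ i, d i ≠ 0) :
    (U * diagonal d * V)⁻¹ = U * diagonal d⁻¹ * V := by
  have hdd : diagonal d * diagonal d⁻¹ = 1 := by
    rw [diagonal_mul_diagonal, ← diagonal_one]
    exact congrArg diagonal (funext fun i => mul_inv_cancel₀ (hd i))
  apply inv_eq_right_inv
  calc U * diagonal d * V * (U * diagonal d⁻¹ * V)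
      = U * (diagonal d * (V * U) * diagonal d⁻¹) * V := by noncomm_ring
    _ = 1 := by rw [mul_eq_one_comm.mp hUV, Matrix.mul_one, hdd, Matrix.mul_one, hUV]

theorem Matrix.mul_diagonal_mul_add_smul_one {U V : Matrix ι ι 𝕜} (hUV : U * V = 1)
    (d : ι → 𝕜) (η : 𝕜) :
    U * diagonal d * V + η • (1 : Matrix ι ι 𝕜) = U * diagonal (fun i => d i + η) * V := by
  have hshift : diagonal (fun i => d i + η) = diagonal d + η • 1 := by
    ext i j
    by_cases h : i = j <;> simp [h]
  rw [hshift, Matrix.mul_add, Matrix.add_mul, Matrix.mul_smul, Matrix.smul_mul, Matrix.mul_one,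
    hUV]

theorem Matrix.mul_inv_add_smul_one_of_diagonal {U V : Matrix ι ι 𝕜} (hUV : U * V = 1)
    {d : ι → 𝕜} {η : 𝕜} (hd : ∀ i, d i + η ≠ 0) :
    U * diagonal d * V * (U * diagonal d * V + η • (1 : Matrix ι ι 𝕜))⁻¹
      = U * diagonal (fun i => d i / (d i + η)) * V := by
  rw [mul_diagonal_mul_add_smul_one hUV, inv_mul_diagonal_mul hUV hd]
  calc U * diagonal d * V * (U * diagonal (fun i => d i + η)⁻¹ * V)
      = U * (diagonal d * (V * U) * diagonal (fun i => d i + η)⁻¹) * V := by noncomm_ring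
    _ = _ := by
      simp only [mul_eq_one_comm.mp hUV, Matrix.mul_one, diagonal_mul_diagonal, Pi.inv_apply,
        div_eq_mul_inv]

end Spectral

theorem Matrix.kronecker_mul_transpose_self {m n R : Type*} [Fintype m] [Fintype n]
    [DecidableEq m] [DecidableEq n] [CommSemiring R] {A : Matrix m m R} {B : Matrix n n R}
    (hA : A * Aᵀ = 1) (hB : B * Bᵀ = 1) : (A ⊗ₖ B) * (A ⊗ₖ B)ᵀ = 1 := by
  rw [← kroneckerMap_transpose, ← mul_kronecker_mul, hA, hB, one_kronecker_one]

theorem Matrix.kronecker_eq_of_eigendecomposition {m n R : Type*} [Fintype m] [Fintype n]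
    [DecidableEq m] [DecidableEq n] [CommSemiring R] (U2 : Matrix m m R) (U1 : Matrix n n R)
    (a : m → R) (b : n → R) :
    (U2 * diagonal a * U2ᵀ) ⊗ₖ (U1 * diagonal b * U1ᵀ)
      = (U2 ⊗ₖ U1) * diagonal (fun p => a p.1 * b p.2) * (U2 ⊗ₖ U1)ᵀ := by
  rw [← kroneckerMap_transpose, ← diagonal_kronecker_diagonal, ← mul_kronecker_mul,
    ← mul_kronecker_mul]

theorem vec_mul_mul_transpose {n1 n2 : ℕ} (A : Matrix (Fin n1) (Fin n1) ℝ)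
    (B : Matrix (Fin n2) (Fin n2) ℝ) (X : Matrix (Fin n1) (Fin n2) ℝ) :
    _root_.vec (A * X * Bᵀ) = (B ⊗ₖ A) *ᵥ _root_.vec X := by
  funext ⟨j, i⟩
  simp only [_root_.vec, mulVec, dotProduct, Matrix.mul_apply, kroneckerMap_apply,
    Fintype.sum_prod_type, transpose_apply, Finset.sum_mul]
  exact Finset.sum_congr rfl fun _ _ => Finset.sum_congr rfl fun _ _ => by ring

theorem vec_of_mul {n1 n2 : ℕ} (w : Fin n1 → Fin n2 → ℝ) (X : Matrix (Fin n1) (Fin n2) ℝ) :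
    _root_.vec (of fun i j => w i j * X i j)
      = diagonal (fun p => w p.2 p.1) *ᵥ _root_.vec X := by
  funext p
  simp [_root_.vec, mulVec_diagonal]

theorem stmt12_general (n1 n2 : ℕ)
    (R1 U1 : Matrix (Fin n1) (Fin n1) ℝ) (R2 U2 : Matrix (Fin n2) (Fin n2) ℝ)
    (lam1 : Fin n1 → ℝ) (lam2 : Fin n2 → ℝ)
    (hU1 : U1 * U1ᵀ = 1)
    (hU2 : U2 * U2ᵀ = 1)
    (hR1 : R1 = U1 * Matrix.diagonal lam1 * U1ᵀ)
    (hR2 : R2 = U2 * Matrix.diagonal lam2 * U2ᵀ)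
    (η : ℝ)
    (hnz : ∀ (i : Fin n1) (j : Fin n2), lam1 i * lam2 j + η ≠ 0)
    (Y : Matrix (Fin n1) (Fin n2) ℝ) (μ : ℝ) :
    (R2 ⊗ₖ R1) *ᵥ
        ((R2 ⊗ₖ R1 + η • (1 : Matrix (Fin n2 × Fin n1) (Fin n2 × Fin n1) ℝ))⁻¹ *ᵥ
          (_root_.vec Y - μ • (fun _ : Fin n2 × Fin n1 => (1 : ℝ))))
      = _root_.vec (U1 * Matrix.diagonal lam1 *
          (Matrix.of fun i j =>
            ((U1ᵀ * (Y - μ • (Matrix.of fun _ _ => (1 : ℝ) : Matrix (Fin n1) (Fin n2) ℝ)) * U2) i j)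
              / (lam1 i * lam2 j + η)) *
          Matrix.diagonal lam2 * U2ᵀ) := by
  set Z := Y - μ • (Matrix.of fun _ _ => (1 : ℝ) : Matrix (Fin n1) (Fin n2) ℝ)
  set U := U2 ⊗ₖ U1
  set g : Fin n2 × Fin n1 → ℝ := fun p => lam2 p.1 * lam1 p.2 / (lam2 p.1 * lam1 p.2 + η)
  have hK : R2 ⊗ₖ R1 = U * diagonal (fun p => lam2 p.1 * lam1 p.2) * Uᵀ := by
    rw [hR1, hR2, kronecker_eq_of_eigendecomposition]
  have hvec_rotate : _root_.vec (U1ᵀ * Z * U2) = Uᵀ *ᵥ _root_.vec Z := by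
    simpa [U, kroneckerMap_transpose] using vec_mul_mul_transpose U1ᵀ U2ᵀ Z
  have hscale : diagonal lam1 * (of fun i j => (U1ᵀ * Z * U2) i j / (lam1 i * lam2 j + η))
        * diagonal lam2 = of fun i j => g (j, i) * (U1ᵀ * Z * U2) i j := by
    ext i j
    simp only [g, diagonal_mul, mul_diagonal, of_apply]
    ring
  calc (R2 ⊗ₖ R1) *ᵥ ((R2 ⊗ₖ R1 + η • 1)⁻¹ *ᵥ (_root_.vec Y - μ • fun _ => 1))
      = ((R2 ⊗ₖ R1) * (R2 ⊗ₖ R1 + η • 1)⁻¹) *ᵥ _root_.vec Z := by rw [mulVec_mulVec]; rfl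
    _ = (U * diagonal g * Uᵀ) *ᵥ _root_.vec Z := by
      rw [hK, mul_inv_add_smul_one_of_diagonal (kronecker_mul_transpose_self hU2 hU1)
        fun p => by simpa [mul_comm] using hnz p.2 p.1]
    _ = _root_.vec (U1 * (of fun i j => g (j, i) * (U1ᵀ * Z * U2) i j) * U2ᵀ) := by
      rw [vec_mul_mul_transpose, vec_of_mul, hvec_rotate, mulVec_mulVec, mulVec_mulVec]
    _ = _ := by rw [← hscale, ← Matrix.mul_assoc, ← Matrix.mul_assoc]

theorem stmt12 (n1 n2 : ℕ) (hn1 : 0 < n1) (hn2 : 0 < n2)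
    (R1 U1 : Matrix (Fin n1) (Fin n1) ℝ) (R2 U2 : Matrix (Fin n2) (Fin n2) ℝ)
    (lam1 : Fin n1 → ℝ) (lam2 : Fin n2 → ℝ)
    (hR1sym : R1.IsSymm) (hR2sym : R2.IsSymm)
    (hU1 : U1 * U1ᵀ = 1) (hU1' : U1ᵀ * U1 = 1)
    (hU2 : U2 * U2ᵀ = 1) (hU2' : U2ᵀ * U2 = 1)
    (hR1 : R1 = U1 * Matrix.diagonal lam1 * U1ᵀ)
    (hR2 : R2 = U2 * Matrix.diagonal lam2 * U2ᵀ)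
    (η : ℝ)
    (hnz : ∀ (i : Fin n1) (j : Fin n2), lam1 i * lam2 j + η ≠ 0)
    (Y : Matrix (Fin n1) (Fin n2) ℝ) (μ : ℝ) :
    (R2 ⊗ₖ R1) *ᵥ
        ((R2 ⊗ₖ R1 + η • (1 : Matrix (Fin n2 × Fin n1) (Fin n2 × Fin n1) ℝ))⁻¹ *ᵥ
          (_root_.vec Y - μ • (fun _ : Fin n2 × Fin n1 => (1 : ℝ))))
      = _root_.vec (U1 * Matrix.diagonal lam1 *
          (Matrix.of fun i j =>
            ((U1ᵀ * (Y - μ • (Matrix.of fun _ _ => (1 : ℝ) : Matrix (Fin n1) (Fin n2) ℝ)) * U2) i j)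
              / (lam1 i * lam2 j + η)) *
          Matrix.diagonal lam2 * U2ᵀ) :=
  stmt12_general n1 n2 R1 U1 R2 U2 lam1 lam2 hU1 hU2 hR1 hR2 η hnz Y μ
end
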